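/- Let r ≥ 1, let v ∈ ℝ^r be nonzero, let a ∈ ℝ and η ∈ ℝ^r with ⟨η,v⟩ = a, and let ε > 0. Put T' = {η + ζ v + u : ζ ∈ [−ε,ε], u ∈ ℝ^r with ⟨u,v⟩ = 0 and ‖u‖ ≤ ε} and let Ω = {λ ∈ ℂ^r : Re λ ∈ T'} be the corresponding tube. Let φ : Ω → ℂ be continuous on Ω and holomorphic on the interior of Ω, and suppose there are C > 0 and n ∈ ℕ such that |(⟨λ,v⟩ − a) · φ(λ)| ≤ C (1 + ‖λ‖)^n for all λ ∈ Ω. Then |φ(λ)| ≤ ε^{-1} ‖v‖^{-2} C (1 + 2ε‖v‖ + ‖λ‖)^n for all λ ∈ Ω. -/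

import Mathlib

/-!
Write `g(λ) = ⟨λ, v⟩ - a`. Along the complex line `z ↦ λ + z v` the factor `g` is affine,
`g(λ + z v) = ‖v‖² (z - z₀)`, and `Re z₀` is exactly the axial coordinate that makes
`λ + z v` stay in `Ω` for `|z - z₀| ≤ ε`. If `|g(λ)| ≥ ε ‖v‖²` the bound is immediate; otherwise
`0` lies in the disc `|z - z₀| ≤ ε`, on whose boundary circle `|g| = ε ‖v‖²`, and the maximum
modulus principle transfers the growth bound from the circle to `λ`. Holomorphy is only known on
the interior of `Ω`, so the disc argument is run for points whose transverse component is
shorter than `ε`, and the general case follows by continuity.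
-/

open Set Filter Topology RealInnerProductSpace

section SolidCylinder

variable {E : Type*} [NormedAddCommGroup E] [InnerProductSpace ℝ E]

def solidCylinder (η v : E) (ε : ℝ) : Set E :=
  {x | ∃ ζ u, ζ ∈ Icc (-ε) ε ∧ ⟪u, v⟫ = 0 ∧ ‖u‖ ≤ ε ∧ x = η + ζ • v + u}

theorem add_add_mem_interior_solidCylinder {η v u : E} {ε ζ : ℝ} (hv : v ≠ 0) (hζ : |ζ| < ε)
    (huv : ⟪u, v⟫ = 0) (hu : ‖u‖ < ε) :
    η + ζ • v + u ∈ interior (solidCylinder η v ε) := by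
  have hv2 : ‖v‖ ^ 2 ≠ 0 := by positivity
  have hcoord : ⟪η + ζ • v + u - η, v⟫ / ‖v‖ ^ 2 = ζ := by
    rw [show η + ζ • v + u - η = ζ • v + u by abel, inner_add_left, real_inner_smul_left, huv,
      real_inner_self_eq_norm_sq, add_zero, mul_div_assoc, div_self hv2, mul_one]
  refine interior_maximal (t := {x | |⟪x - η, v⟫ / ‖v‖ ^ 2| < ε ∧
    ‖x - η - (⟪x - η, v⟫ / ‖v‖ ^ 2) • v‖ < ε}) ?_ ?_ ⟨by rwa [hcoord], ?_⟩
  · rintro x ⟨hcx, hux⟩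
    refine ⟨_, _, abs_le.mp hcx.le, ?_, hux.le, by abel⟩
    rw [inner_sub_left, real_inner_smul_left, real_inner_self_eq_norm_sq,
      div_mul_cancel₀ _ hv2, sub_self]
  · rw [ofPred_and]
    apply IsOpen.inter <;> apply isOpen_lt <;> fun_prop
  · rwa [hcoord, show η + ζ • v + u - η - ζ • v = u by abel]

end SolidCylinder

namespace EuclideanSpace

variable {ι : Type*}

def re (l : EuclideanSpace ℂ ι) : EuclideanSpace ℝ ι := WithLp.toLp 2 fun m => (l m).re

def ofReal (x : EuclideanSpace ℝ ι) : EuclideanSpace ℂ ι := WithLp.toLp 2 fun m => (x m : ℂ)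

def tube (T : Set (EuclideanSpace ℝ ι)) : Set (EuclideanSpace ℂ ι) := re ⁻¹' T

@[simp] theorem re_apply (l : EuclideanSpace ℂ ι) (m : ι) : re l m = (l m).re := rfl

@[simp] theorem ofReal_apply (x : EuclideanSpace ℝ ι) (m : ι) : ofReal x m = x m := rfl

theorem continuous_re : Continuous (re : EuclideanSpace ℂ ι → EuclideanSpace ℝ ι) :=
  (PiLp.continuous_toLp 2 _).comp
    (continuous_pi fun m => Complex.continuous_re.comp (PiLp.continuous_apply _ _ m))

theorem norm_ofReal [Fintype ι] (x : EuclideanSpace ℝ ι) : ‖ofReal x‖ = ‖x‖ := by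
  simp [EuclideanSpace.norm_eq]

theorem re_add_smul_ofReal (l : EuclideanSpace ℂ ι) (z : ℂ) (x : EuclideanSpace ℝ ι) :
    re (l + z • ofReal x) = re l + z.re • x := by
  ext m; simp

theorem sum_mul_eq_inner [Fintype ι] (x v : EuclideanSpace ℝ ι) : ∑ m, x m * v m = ⟪x, v⟫ := by
  simp [inner_eq_star_dotProduct, dotProduct, mul_comm]

theorem re_sum_mul_ofReal [Fintype ι] (l : EuclideanSpace ℂ ι) (v : EuclideanSpace ℝ ι) :
    (∑ m, l m * (v m : ℂ)).re = ⟪re l, v⟫ := by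
  simp [← sum_mul_eq_inner, Complex.re_sum]

theorem sum_add_smul_ofReal_mul [Fintype ι] (l : EuclideanSpace ℂ ι) (z : ℂ)
    (v : EuclideanSpace ℝ ι) :
    ∑ m, (l + z • ofReal v) m * (v m : ℂ) = ∑ m, l m * (v m : ℂ) + z * (‖v‖ ^ 2 : ℝ) := by
  rw [← real_inner_self_eq_norm_sq, ← sum_mul_eq_inner, Complex.ofReal_sum, Finset.mul_sum,
    ← Finset.sum_add_distrib]
  refine Finset.sum_congr rfl fun m _ => ?_
  simp only [PiLp.add_apply, PiLp.smul_apply, ofReal_apply, smul_eq_mul, Complex.ofReal_mul]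
  ring

theorem preimage_interior_subset_interior_tube (T : Set (EuclideanSpace ℝ ι)) :
    re ⁻¹' interior T ⊆ interior (tube T) :=
  preimage_interior_subset_interior_preimage continuous_re

end EuclideanSpace

section GrowthTransfer

open EuclideanSpace Metric

variable {ι : Type*} [Fintype ι] {η v : EuclideanSpace ℝ ι} {a ε : ℝ}
  {φ : EuclideanSpace ℂ ι → ℂ} {G : ℝ → ℝ}

theorem norm_le_of_norm_linearFactor_le (hv : v ≠ 0) (hε : 0 < ε) (hη : ⟪η, v⟫ = a)
    (hG : MonotoneOn G (Ici 0))
    (hφc : ContinuousOn φ (tube (solidCylinder η v ε)))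
    (hφd : DifferentiableOn ℂ φ (interior (tube (solidCylinder η v ε))))
    (hbound : ∀ l ∈ tube (solidCylinder η v ε), ‖(∑ m, l m * (v m : ℂ) - a) * φ l‖ ≤ G ‖l‖)
    {l : EuclideanSpace ℂ ι} {ζ : ℝ} {u : EuclideanSpace ℝ ι} (huv : ⟪u, v⟫ = 0) (hu : ‖u‖ < ε)
    (hl : re l = η + ζ • v + u) (hnear : ‖∑ m, l m * (v m : ℂ) - a‖ ≤ ε * ‖v‖ ^ 2) :
    ‖φ l‖ ≤ G (‖l‖ + 2 * ε * ‖v‖) / (ε * ‖v‖ ^ 2) := by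
  have hv2 : 0 < ‖v‖ ^ 2 := by positivity
  set w := ∑ m, l m * (v m : ℂ) - a
  -- the zero of the linear factor on the complex line `l + ℂ v`
  set c : ℂ := -w / (‖v‖ ^ 2 : ℝ)
  set L : ℂ → EuclideanSpace ℂ ι := fun z => l + z • ofReal v
  have hwre : w.re = ζ * ‖v‖ ^ 2 := by
    rw [Complex.sub_re, re_sum_mul_ofReal, hl, inner_add_left, inner_add_left, real_inner_smul_left,
      huv, hη, real_inner_self_eq_norm_sq, Complex.ofReal_re]
    ring
  have hc : ‖c‖ ≤ ε := by
    rwa [norm_div, norm_neg, Complex.norm_real, Real.norm_of_nonneg hv2.le, div_le_iff₀ hv2]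
  have hfactor (z : ℂ) : ∑ m, L z m * (v m : ℂ) - a = (‖v‖ ^ 2 : ℝ) * (z - c) := by
    have : ((‖v‖ ^ 2 : ℝ) : ℂ) ≠ 0 := by exact_mod_cast hv2.ne'
    simp only [L, sum_add_smul_ofReal_mul, c]
    field_simp
    ring
  have hreL (z : ℂ) : re (L z) = η + (z - c).re • v + u := by
    have hcre : c.re = -ζ := by
      simp only [c, neg_div, Complex.neg_re, Complex.div_ofReal_re, hwre,
        mul_div_cancel_right₀ _ hv2.ne']
    rw [re_add_smul_ofReal, hl, Complex.sub_re, hcre, sub_neg_eq_add, add_smul]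
    abel
  have hdisc : ∀ z ∈ closedBall c ε, L z ∈ tube (solidCylinder η v ε) := fun z hz =>
    ⟨_, u, abs_le.mp ((Complex.abs_re_le_norm _).trans (mem_closedBall_iff_norm.mp hz)), huv,
      hu.le, hreL z⟩
  have hball : ∀ z ∈ ball c ε, L z ∈ interior (tube (solidCylinder η v ε)) := fun z hz =>
    preimage_interior_subset_interior_tube _ <| by
      rw [mem_preimage, hreL z]
      exact add_add_mem_interior_solidCylinder hv
        ((Complex.abs_re_le_norm _).trans_lt (mem_ball_iff_norm.mp hz)) huv hu
  have hL : Differentiable ℂ L := (differentiable_id.smul_const _).const_add _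
  have hdc : DiffContOnCl ℂ (φ ∘ L) (ball c ε) := by
    refine ⟨hφd.comp hL.differentiableOn hball, ?_⟩
    rw [closure_ball c hε.ne']
    exact hφc.comp hL.continuous.continuousOn hdisc
  have hsphere : ∀ z ∈ frontier (ball c ε),
      ‖(φ ∘ L) z‖ ≤ G (‖l‖ + 2 * ε * ‖v‖) / (ε * ‖v‖ ^ 2) := by
    rw [frontier_ball c hε.ne']
    intro z hz
    have hz' : ‖z - c‖ = ε := mem_sphere_iff_norm.mp hz
    have hLz : ‖L z‖ ≤ ‖l‖ + 2 * ε * ‖v‖ := calc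
      ‖L z‖ ≤ ‖l‖ + ‖z‖ * ‖v‖ := by
        simpa only [norm_smul, norm_ofReal] using norm_add_le l (z • ofReal v)
      _ ≤ ‖l‖ + 2 * ε * ‖v‖ := by
        gcongr
        linarith [norm_le_norm_add_norm_sub' z c]
    rw [le_div_iff₀ (by positivity)]
    calc ‖(φ ∘ L) z‖ * (ε * ‖v‖ ^ 2) = ‖(∑ m, L z m * (v m : ℂ) - a) * φ (L z)‖ := by
          rw [norm_mul, hfactor, norm_mul, hz', Complex.norm_real, Real.norm_of_nonneg hv2.le]
          simp only [Function.comp]; ring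
      _ ≤ G ‖L z‖ := hbound _ (hdisc z (sphere_subset_closedBall hz))
      _ ≤ G (‖l‖ + 2 * ε * ‖v‖) := hG (norm_nonneg _) (mem_Ici.mpr (by positivity)) hLz
  have h0 : (0 : ℂ) ∈ closure (ball c ε) := by
    rwa [closure_ball c hε.ne', mem_closedBall, dist_zero_left]
  simpa [L] using Complex.norm_le_of_forall_mem_frontier_norm_le isBounded_ball hdc hsphere h0

theorem norm_le_of_transverse_norm_lt (hv : v ≠ 0) (hε : 0 < ε) (hη : ⟪η, v⟫ = a)
    (hG : MonotoneOn G (Ici 0))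
    (hφc : ContinuousOn φ (tube (solidCylinder η v ε)))
    (hφd : DifferentiableOn ℂ φ (interior (tube (solidCylinder η v ε))))
    (hbound : ∀ l ∈ tube (solidCylinder η v ε), ‖(∑ m, l m * (v m : ℂ) - a) * φ l‖ ≤ G ‖l‖)
    {l : EuclideanSpace ℂ ι} {ζ : ℝ} {u : EuclideanSpace ℝ ι} (hζ : ζ ∈ Icc (-ε) ε)
    (huv : ⟪u, v⟫ = 0) (hu : ‖u‖ < ε) (hl : re l = η + ζ • v + u) :
    ‖φ l‖ ≤ G (‖l‖ + 2 * ε * ‖v‖) / (ε * ‖v‖ ^ 2) := by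
  by_cases hnear : ‖∑ m, l m * (v m : ℂ) - a‖ ≤ ε * ‖v‖ ^ 2
  · exact norm_le_of_norm_linearFactor_le hv hε hη hG hφc hφd hbound huv hu hl hnear
  rw [le_div_iff₀ (by positivity)]
  calc ‖φ l‖ * (ε * ‖v‖ ^ 2) ≤ ‖φ l‖ * ‖∑ m, l m * (v m : ℂ) - a‖ := by
        gcongr; exact (not_le.mp hnear).le
    _ = ‖(∑ m, l m * (v m : ℂ) - a) * φ l‖ := by rw [norm_mul, mul_comm]
    _ ≤ G ‖l‖ := hbound l ⟨ζ, u, hζ, huv, hu.le, hl⟩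
    _ ≤ G (‖l‖ + 2 * ε * ‖v‖) :=
      hG (norm_nonneg _) (mem_Ici.mpr (by positivity)) (le_add_of_nonneg_right (by positivity))

theorem norm_le_of_mem_tube (hv : v ≠ 0) (hε : 0 < ε) (hη : ⟪η, v⟫ = a)
    (hG : MonotoneOn G (Ici 0)) (hGc : Continuous G)
    (hφc : ContinuousOn φ (tube (solidCylinder η v ε)))
    (hφd : DifferentiableOn ℂ φ (interior (tube (solidCylinder η v ε))))
    (hbound : ∀ l ∈ tube (solidCylinder η v ε), ‖(∑ m, l m * (v m : ℂ) - a) * φ l‖ ≤ G ‖l‖)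
    {l : EuclideanSpace ℂ ι} (hl : l ∈ tube (solidCylinder η v ε)) :
    ‖φ l‖ ≤ G (‖l‖ + 2 * ε * ‖v‖) / (ε * ‖v‖ ^ 2) := by
  obtain ⟨ζ, u, hζ, huv, hu, hlu⟩ := hl
  -- shrink the transverse component `u` and pass to the limit
  set p : ℝ → EuclideanSpace ℂ ι := fun t => l + (-t : ℂ) • ofReal u
  have hp : Continuous p := by fun_prop
  have hp0 : p 0 = l := by simp [p]
  have hpre (t : ℝ) : re (p t) = η + ζ • v + (1 - t) • u := by
    rw [re_add_smul_ofReal, hlu, sub_smul, one_smul, Complex.neg_re, Complex.ofReal_re, neg_smul]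
    abel
  have hpu : ∀ t ∈ Ioo (0 : ℝ) 1, ‖(1 - t) • u‖ < ε := fun t ht => by
    rw [norm_smul, Real.norm_of_nonneg (by linarith [ht.2])]
    nlinarith [ht.1, ht.2, norm_nonneg u]
  have hpΩ : ∀ᶠ t in 𝓝[>] 0, p t ∈ tube (solidCylinder η v ε) := by
    filter_upwards [Ioo_mem_nhdsGT zero_lt_one] with t ht
    exact ⟨ζ, (1 - t) • u, hζ, by rw [real_inner_smul_left, huv, mul_zero], (hpu t ht).le, hpre t⟩
  have hφp : Tendsto (fun t => ‖φ (p t)‖) (𝓝[>] 0) (𝓝 ‖φ l‖) := by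
    refine ((hφc l ⟨ζ, u, hζ, huv, hu, hlu⟩).tendsto.comp ?_).norm
    exact tendsto_nhdsWithin_iff.mpr ⟨hp0 ▸ (hp.tendsto 0).mono_left nhdsWithin_le_nhds, hpΩ⟩
  have hbp : Tendsto (fun t => G (‖p t‖ + 2 * ε * ‖v‖) / (ε * ‖v‖ ^ 2)) (𝓝[>] 0)
      (𝓝 (G (‖l‖ + 2 * ε * ‖v‖) / (ε * ‖v‖ ^ 2))) := by
    have : Continuous fun t => G (‖p t‖ + 2 * ε * ‖v‖) / (ε * ‖v‖ ^ 2) := by fun_prop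
    simpa only [hp0] using (this.tendsto 0).mono_left nhdsWithin_le_nhds
  refine le_of_tendsto_of_tendsto hφp hbp ?_
  filter_upwards [Ioo_mem_nhdsGT zero_lt_one] with t ht
  exact norm_le_of_transverse_norm_lt hv hε hη hG hφc hφd hbound hζ
    (by rw [real_inner_smul_left, huv, mul_zero]) (hpu t ht) (hpre t)

end GrowthTransfer

theorem stmt1 (r : ℕ)
    (v : EuclideanSpace ℝ (Fin r)) (hv : v ≠ 0) (a : ℝ)
    (η : EuclideanSpace ℝ (Fin r)) (hη : ∑ m : Fin r, η m * v m = a)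
    (ε : ℝ) (hε : 0 < ε)
    (T' : Set (EuclideanSpace ℝ (Fin r)))
    (hT' : T' = {x | ∃ ζ : ℝ, ∃ u : EuclideanSpace ℝ (Fin r),
        ζ ∈ Set.Icc (-ε) ε ∧ (∑ m : Fin r, u m * v m) = 0 ∧ ‖u‖ ≤ ε ∧ x = η + ζ • v + u})
    (Ω : Set (EuclideanSpace ℂ (Fin r)))
    (hΩ : Ω = {l | (WithLp.toLp 2 (fun m => (l m).re) : EuclideanSpace ℝ (Fin r)) ∈ T'})
    (φ : EuclideanSpace ℂ (Fin r) → ℂ)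
    (hφc : ContinuousOn φ Ω) (hφd : DifferentiableOn ℂ φ (interior Ω))
    (C : ℝ) (hC : 0 < C) (n : ℕ)
    (hbound : ∀ l ∈ Ω, ‖((∑ m : Fin r, l m * (v m : ℂ)) - (a : ℂ)) * φ l‖ ≤ C * (1 + ‖l‖) ^ n) :
    ∀ l ∈ Ω, ‖φ l‖ ≤ ε⁻¹ * (‖v‖ ^ 2)⁻¹ * C * (1 + 2 * ε * ‖v‖ + ‖l‖) ^ n := by
  simp only [EuclideanSpace.sum_mul_eq_inner] at hη hT'
  have hΩ' : Ω = EuclideanSpace.tube (solidCylinder η v ε) := hΩ.trans (hT' ▸ rfl)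
  subst hΩ'
  have hG : MonotoneOn (fun t : ℝ => C * (1 + t) ^ n) (Ici 0) := fun s hs t _ hst => by
    simp only [mem_Ici] at hs
    dsimp only
    gcongr
  intro l hl
  convert norm_le_of_mem_tube hv hε hη hG (by fun_prop) hφc hφd hbound hl using 1
  field_simp
  ring
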